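/- Let H be a Raikov complete normal subgroup of a Hausdorff topological group G such that the quotient group G/H is a minimal topological group. Then H is a key subgroup of G. -/

import Mathlib

open Topology

/-- Subspace topology induced on a subgroup `H` by a topology `t` on `G`. -/
def subTop {G : Type*} [Group G] (t : TopologicalSpace G) (H : Subgroup G) :
    TopologicalSpace H :=
  t.induced ((↑) : H → G)

/-- Quotient topology on the coset space `G ⧸ H` induced by a topology `t` on `G`. -/
def quotTop {G : Type*} [Group G] (t : TopologicalSpace G) (H : Subgroup G) :
    TopologicalSpace (G ⧸ H) :=
  t.coinduced (QuotientGroup.mk : G → G ⧸ H)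

/-- `H` is a key subgroup of `(G, γ)`: every coarser Hausdorff group topology `γ₁`
(`γ ≤ γ₁` in Mathlib's order means `γ₁` is coarser than `γ`) inducing the original
subspace topology on `H` coincides with `γ`. -/
def IsKey {G : Type*} [Group G] (γ : TopologicalSpace G) (H : Subgroup G) : Prop :=
  ∀ γ₁ : TopologicalSpace G, γ ≤ γ₁ → @IsTopologicalGroup G γ₁ _ → @T2Space G γ₁ →
    subTop γ₁ H = subTop γ H → γ₁ = γ

/-- `H` is a co-key subgroup of `(G, γ)`: every coarser Hausdorff group topology `γ₁`
inducing the original quotient topology on `G ⧸ H` coincides with `γ`. -/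
def IsCoKey {G : Type*} [Group G] (γ : TopologicalSpace G) (H : Subgroup G) : Prop :=
  ∀ γ₁ : TopologicalSpace G, γ ≤ γ₁ → @IsTopologicalGroup G γ₁ _ → @T2Space G γ₁ →
    quotTop γ₁ H = quotTop γ H → γ₁ = γ

/-- `H` is relatively minimal in `(G, γ)`: every coarser Hausdorff group topology on `G`
induces the original subspace topology on `H`. -/
def IsRelMin {G : Type*} [Group G] (γ : TopologicalSpace G) (H : Subgroup G) : Prop :=
  ∀ γ₁ : TopologicalSpace G, γ ≤ γ₁ → @IsTopologicalGroup G γ₁ _ → @T2Space G γ₁ →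
    subTop γ₁ H = subTop γ H

/-- `H` is co-minimal in `(G, γ)`: every coarser Hausdorff group topology on `G`
induces the original quotient topology on the coset space `G ⧸ H`. -/
def IsCoMin {G : Type*} [Group G] (γ : TopologicalSpace G) (H : Subgroup G) : Prop :=
  ∀ γ₁ : TopologicalSpace G, γ ≤ γ₁ → @IsTopologicalGroup G γ₁ _ → @T2Space G γ₁ →
    quotTop γ₁ H = quotTop γ H

/-- `(X, γ)` is a minimal topological group: no strictly coarser Hausdorff group topology. -/
def IsMinimalGroup {X : Type*} [Group X] (γ : TopologicalSpace X) : Prop :=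
  ∀ γ₁ : TopologicalSpace X, γ ≤ γ₁ → @IsTopologicalGroup X γ₁ _ → @T2Space X γ₁ → γ₁ = γ

/-- The two-sided (Raikov) uniformity filter of a group topology. -/
def twoSidedUniformity {X : Type*} [Group X] (t : TopologicalSpace X) : Filter (X × X) :=
  Filter.comap (fun p : X × X => p.2 / p.1) (@nhds X t 1) ⊓
    Filter.comap (fun p : X × X => p.1⁻¹ * p.2) (@nhds X t 1)

/-- Raikov completeness: every Cauchy filter with respect to the two-sided uniformity
converges. -/
def RaikovComplete {X : Type*} [Group X] (t : TopologicalSpace X) : Prop :=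
  ∀ f : Filter X, f.NeBot → f ×ˢ f ≤ twoSidedUniformity t → ∃ x, f ≤ @nhds X t x


/-!
Let `γ₁ ⊆ γ` be a Hausdorff group topology agreeing with `γ` on `H`. Then `H` is still Raikov
complete in `γ₁`, hence `γ₁`-closed, so `G ⧸ H` with the `γ₁`-quotient topology is a Hausdorff
topological group; it is coarser than the minimal `γ`-quotient and therefore equal to it.
Merson's lemma — a coarser group topology that agrees with the original one both on a subgroup
and on its coset space is the original one — now gives `γ₁ = γ`.
-/

open Filter Set Pointwise Topology

lemma nhds_subTop {G : Type*} [Group G] (t : TopologicalSpace G) (H : Subgroup G) (h : H) :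
    @nhds H (subTop t H) h = comap ((↑) : H → G) (@nhds G t h) :=
  @nhds_induced _ _ t _ h

lemma twoSidedUniformity_subTop {G : Type*} [Group G] (t : TopologicalSpace G)
    (H : Subgroup G) :
    twoSidedUniformity (subTop t H) =
      comap (Prod.map ((↑) : H → G) (↑)) (twoSidedUniformity t) := by
  simp only [twoSidedUniformity, nhds_subTop, comap_inf, comap_comap]
  rfl

lemma prod_self_le_twoSidedUniformity {X : Type*} [Group X] [TopologicalSpace X]
    [IsTopologicalGroup X] {f : Filter X} {x : X} (hf : f ≤ 𝓝 x) :
    f ×ˢ f ≤ twoSidedUniformity ‹TopologicalSpace X› := by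
  have hx : Tendsto id f (𝓝 x) := hf
  refine le_inf (tendsto_iff_comap.mp ?_) (tendsto_iff_comap.mp ?_)
  · simpa using (hx.comp tendsto_snd).div' (hx.comp tendsto_fst)
  · simpa using (hx.comp tendsto_fst).inv.mul (hx.comp tendsto_snd)

lemma Subgroup.isClosed_of_raikovComplete {G : Type*} [Group G] [TopologicalSpace G]
    [IsTopologicalGroup G] [T2Space G] (H : Subgroup G)
    (hR : RaikovComplete (subTop ‹TopologicalSpace G› H)) : IsClosed (H : Set G) := by
  refine isClosed_of_closure_subset fun x hx => ?_
  set f : Filter H := Filter.comap ((↑) : H → G) (𝓝 x)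
  have hf : Tendsto ((↑) : H → G) f (𝓝 x) := tendsto_comap
  have hne : f.NeBot := mem_closure_iff_comap_neBot.mp hx
  have hCauchy : f ×ˢ f ≤ twoSidedUniformity (subTop ‹TopologicalSpace G› H) := by
    rw [twoSidedUniformity_subTop, ← Filter.map_le_iff_le_comap, ← Filter.prod_map_map_eq']
    exact prod_self_le_twoSidedUniformity hf
  obtain ⟨h, hfh⟩ := hR f hne hCauchy
  have hf' : Tendsto ((↑) : H → G) f (𝓝 h) := by
    rwa [tendsto_iff_comap, ← nhds_subTop]
  exact tendsto_nhds_unique hf hf' ▸ h.2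

lemma exists_nhds_one_inv_mul_mem {G : Type*} [Group G] [TopologicalSpace G]
    [IsTopologicalGroup G] {O : Set G} (hO : O ∈ 𝓝 (1 : G)) :
    ∃ P ∈ 𝓝 (1 : G), ∀ p ∈ P, ∀ q ∈ P, p⁻¹ * q ∈ O := by
  obtain ⟨V, hV, hVO⟩ := exists_nhds_split_inv hO
  exact ⟨V⁻¹, inv_mem_nhds_one G hV, fun p hp q hq => by simpa using hVO _ hp _ hq⟩

section Merson

variable {G : Type*} [Group G] {γ γ₁ : TopologicalSpace G} {H : Subgroup G}

lemma exists_mem_nhds_one_inter_subset_of_subTop_eq (hsub : subTop γ₁ H = subTop γ H)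
    {V : Set G} (hV : V ∈ @nhds G γ 1) : ∃ O ∈ @nhds G γ₁ 1, O ∩ H ⊆ V := by
  have hV' : ((↑) : H → G) ⁻¹' V ∈ @nhds H (subTop γ₁ H) 1 := by
    rw [hsub, nhds_subTop]
    exact preimage_mem_comap hV
  rw [nhds_subTop] at hV'
  obtain ⟨O, hO, hOV⟩ := mem_comap.mp hV'
  exact ⟨O, hO, fun g ⟨hgO, hgH⟩ => hOV (show (⟨g, hgH⟩ : H) ∈ _ from hgO)⟩

lemma isOpen_mul_subgroup_of_quotTop_eq (hγ : @IsTopologicalGroup G γ _)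
    (hquot : quotTop γ₁ H = quotTop γ H) {Q : Set G} (hQ : IsOpen[γ] Q) :
    IsOpen[γ₁] (Q * H) := by
  have hQH : IsOpen[quotTop γ H] (((↑) : G → G ⧸ H) '' Q) := by
    let := γ
    exact QuotientGroup.isOpenMap_coe Q hQ
  rw [← hquot] at hQH
  rw [← QuotientGroup.preimage_image_mk_eq_mul]
  exact isOpen_coinduced.mp hQH

theorem eq_of_subTop_eq_of_quotTop_eq (hγ : @IsTopologicalGroup G γ _)
    (hγ₁ : @IsTopologicalGroup G γ₁ _) (hle : γ ≤ γ₁) (hsub : subTop γ₁ H = subTop γ H)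
    (hquot : quotTop γ₁ H = quotTop γ H) : γ₁ = γ := by
  refine IsTopologicalGroup.ext hγ₁ hγ (le_antisymm (fun U hU => ?_) (nhds_mono hle))
  obtain ⟨V, hV, hVU⟩ := @exists_nhds_one_split G γ _ _ U hU
  obtain ⟨O, hO, hOV⟩ := exists_mem_nhds_one_inter_subset_of_subTop_eq hsub hV
  obtain ⟨P, hP, hPO⟩ := @exists_nhds_one_inv_mul_mem G _ γ₁ hγ₁ O hO
  set Q := @interior G γ (V ∩ P)
  have hQ1 : (1 : G) ∈ Q :=
    @mem_interior_iff_mem_nhds G γ _ _ |>.mpr (inter_mem hV (nhds_mono hle hP))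
  have hQH : Q * H ∈ @nhds G γ₁ 1 :=
    @IsOpen.mem_nhds G γ₁ _ _
      (isOpen_mul_subgroup_of_quotTop_eq hγ hquot (@isOpen_interior G γ _))
      ⟨1, hQ1, 1, H.one_mem, mul_one 1⟩
  -- If `q * a ∈ P` with `q ∈ Q` and `a ∈ H`, then `a = q⁻¹ * (q * a) ∈ O ∩ H ⊆ V`.
  refine mem_of_superset (inter_mem hQH hP) ?_
  rintro _ ⟨⟨q, hq, a, ha, rfl⟩, hqaP⟩
  have hqVP := @interior_subset G γ _ q hq
  have haO : a ∈ O := by simpa using hPO q hqVP.2 _ hqaP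
  exact hVU q hqVP.1 a (hOV ⟨haO, ha⟩)

end Merson

theorem isKey_of_raikovComplete_normal_minimal_quotient_general {G : Type*} [Group G]
    (γ : TopologicalSpace G) (hγ : @IsTopologicalGroup G γ _)
    (H : Subgroup G) [H.Normal] (hR : RaikovComplete (subTop γ H))
    (hmin : IsMinimalGroup (quotTop γ H)) :
    IsKey γ H := by
  intro γ₁ hle hγ₁ hT2₁ hsub
  let := γ₁
  have : IsClosed (H : Set G) := H.isClosed_of_raikovComplete (hsub ▸ hR)
  have hquot : quotTop γ₁ H = quotTop γ H :=
    hmin _ (coinduced_mono hle) (inferInstanceAs (IsTopologicalGroup (G ⧸ H)))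
      (inferInstanceAs (T2Space (G ⧸ H)))
  exact eq_of_subTop_eq_of_quotTop_eq hγ hγ₁ hle hsub hquot

/-- A Raikov complete normal subgroup with minimal quotient group is a key subgroup. -/
theorem isKey_of_raikovComplete_normal_minimal_quotient {G : Type*} [Group G]
    (γ : TopologicalSpace G) (hγ : @IsTopologicalGroup G γ _) (hT2 : @T2Space G γ)
    (H : Subgroup G) [H.Normal] (hR : RaikovComplete (subTop γ H))
    (hmin : IsMinimalGroup (quotTop γ H)) :
    IsKey γ H :=
  isKey_of_raikovComplete_normal_minimal_quotient_general γ hγ H hR hmin
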